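/- In the Nash bargaining game, for every a ∈ {0,...,100}, the pure strategy profile (a, 100−a) is a cooperative equilibrium (CE). -/
import Mathlib


open scoped BigOperators

section GameDefs

variable {A1 A2 : Type} [Fintype A1] [Fintype A2]

/-- A mixed strategy over a finite action set: nonnegative weights summing to 1. -/
def IsMixed {A : Type} [Fintype A] (s : A → ℝ) : Prop :=
  (∀ a, 0 ≤ s a) ∧ ∑ a, s a = 1

/-- Expected utility of a utility function `u` under mixed strategies `s1`, `s2`. -/
noncomputable def EU (u : A1 → A2 → ℝ) (s1 : A1 → ℝ) (s2 : A2 → ℝ) : ℝ :=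
  ∑ a1, ∑ a2, s1 a1 * s2 a2 * u a1 a2

/-- `s2` is a best response of player 2 (with utility `u2`) to `s1`. -/
def IsBR2 (u2 : A1 → A2 → ℝ) (s1 : A1 → ℝ) (s2 : A2 → ℝ) : Prop :=
  IsMixed s2 ∧ ∀ t2, IsMixed t2 → EU u2 s1 t2 ≤ EU u2 s1 s2

/-- `s1` is a best response of player 1 (with utility `u1`) to `s2`. -/
def IsBR1 (u1 : A1 → A2 → ℝ) (s2 : A2 → ℝ) (s1 : A1 → ℝ) : Prop :=
  IsMixed s1 ∧ ∀ t1, IsMixed t1 → EU u1 t1 s2 ≤ EU u1 s1 s2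

/-- `BU1`: the best utility player 1 can obtain if player 2 best responds. -/
noncomputable def BU1 (u1 u2 : A1 → A2 → ℝ) : ℝ :=
  sSup {x | ∃ s1 s2, IsMixed s1 ∧ IsBR2 u2 s1 s2 ∧ x = EU u1 s1 s2}

/-- `BU2`: the best utility player 2 can obtain if player 1 best responds. -/
noncomputable def BU2 (u1 u2 : A1 → A2 → ℝ) : ℝ :=
  sSup {x | ∃ s1 s2, IsMixed s2 ∧ IsBR1 u1 s2 s1 ∧ x = EU u2 s1 s2}

/-- A (mixed) strategy profile. -/
def IsProfile (s : (A1 → ℝ) × (A2 → ℝ)) : Prop := IsMixed s.1 ∧ IsMixed s.2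

/-- Perfect cooperative equilibrium. -/
def IsPCE (u1 u2 : A1 → A2 → ℝ) (s : (A1 → ℝ) × (A2 → ℝ)) : Prop :=
  IsProfile s ∧ BU1 u1 u2 ≤ EU u1 s.1 s.2 ∧ BU2 u1 u2 ≤ EU u2 s.1 s.2

/-- Nash equilibrium. -/
def IsNE (u1 u2 : A1 → A2 → ℝ) (s : (A1 → ℝ) × (A2 → ℝ)) : Prop :=
  IsBR1 u1 s.2 s.1 ∧ IsBR2 u2 s.1 s.2

/-- `s` Pareto dominates `s'`. -/
def ParetoDom (u1 u2 : A1 → A2 → ℝ) (s s' : (A1 → ℝ) × (A2 → ℝ)) : Prop :=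
  EU u1 s'.1 s'.2 ≤ EU u1 s.1 s.2 ∧ EU u2 s'.1 s'.2 ≤ EU u2 s.1 s.2

/-- `s` strongly Pareto dominates `s'`. -/
def StrongParetoDom (u1 u2 : A1 → A2 → ℝ) (s s' : (A1 → ℝ) × (A2 → ℝ)) : Prop :=
  ParetoDom u1 u2 s s' ∧
    (EU u1 s'.1 s'.2 < EU u1 s.1 s.2 ∨ EU u2 s'.1 s'.2 < EU u2 s.1 s.2)

/-- α-perfect cooperative equilibrium. -/
def IsAlphaPCE (u1 u2 : A1 → A2 → ℝ) (α : ℝ) (s : (A1 → ℝ) × (A2 → ℝ)) : Prop :=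
  IsProfile s ∧ α + BU1 u1 u2 ≤ EU u1 s.1 s.2 ∧ α + BU2 u1 u2 ≤ EU u2 s.1 s.2

/-- Max-PCE: an α-PCE such that no α'-PCE exists for α' > α. -/
def IsMPCE (u1 u2 : A1 → A2 → ℝ) (s : (A1 → ℝ) × (A2 → ℝ)) : Prop :=
  ∃ α, IsAlphaPCE u1 u2 α s ∧ ∀ α' s', IsAlphaPCE u1 u2 α' s' → α' ≤ α

/-- Cooperative equilibrium: every deviation is either unprofitable when the other
player best responds, or leaves the other player strictly worse off no matter what,
in which case the other player can punish. -/
def IsCE (u1 u2 : A1 → A2 → ℝ) (s : (A1 → ℝ) × (A2 → ℝ)) : Prop :=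
  IsProfile s ∧
  (∀ s1', IsMixed s1' →
    (sSup {x | ∃ s2', IsBR2 u2 s1' s2' ∧ x = EU u1 s1' s2'} ≤ EU u1 s.1 s.2) ∨
    (sSup {x | ∃ s2', IsMixed s2' ∧ x = EU u2 s1' s2'} < EU u2 s.1 s.2 ∧
      ∃ s2', IsMixed s2' ∧ EU u1 s1' s2' ≤ EU u1 s.1 s.2)) ∧
  (∀ s2', IsMixed s2' →
    (sSup {x | ∃ s1', IsBR1 u1 s2' s1' ∧ x = EU u2 s1' s2'} ≤ EU u2 s.1 s.2) ∨
    (sSup {x | ∃ s1', IsMixed s1' ∧ x = EU u1 s1' s2'} < EU u1 s.1 s.2 ∧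
      ∃ s1', IsMixed s1' ∧ EU u2 s1' s2' ≤ EU u2 s.1 s.2))

end GameDefs

/-- The point-mass (pure) strategy on action `a`. -/
def pt {A : Type} [DecidableEq A] (a : A) : A → ℝ := fun b => if b = a then 1 else 0

/-- Player 1's payoff in the Nash bargaining game. -/
noncomputable def nbU1 : Fin 101 → Fin 101 → ℝ := fun x y =>
  if (x : ℕ) + (y : ℕ) ≤ 100 then ((x : ℕ) : ℝ) else 0

/-- Player 2's payoff in the Nash bargaining game. -/
noncomputable def nbU2 : Fin 101 → Fin 101 → ℝ := fun x y =>
  if (x : ℕ) + (y : ℕ) ≤ 100 then ((y : ℕ) : ℝ) else 0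

set_option linter.unusedSectionVars false

section Helpers

variable {A1 A2 : Type} [Fintype A1] [Fintype A2] [DecidableEq A1] [DecidableEq A2]

lemma pt_mixed (a : A1) : IsMixed (pt a) := by
  constructor
  · intro b; unfold pt; split <;> norm_num
  · simp [pt]

lemma EU_pt_left (u : A1 → A2 → ℝ) (a : A1) (s2 : A2 → ℝ) :
    EU u (pt a) s2 = ∑ y, s2 y * u a y := by
  simp [EU, pt, ite_mul, zero_mul, one_mul, Finset.sum_ite_eq]

lemma EU_pt_right (u : A1 → A2 → ℝ) (s1 : A1 → ℝ) (b : A2) :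
    EU u s1 (pt b) = ∑ x, s1 x * u x b := by
  simp [EU, pt, mul_ite, mul_zero, mul_one, ite_mul, zero_mul, Finset.sum_ite_eq']

lemma EU_pt_pt (u : A1 → A2 → ℝ) (a : A1) (b : A2) : EU u (pt a) (pt b) = u a b := by
  simp [EU_pt_left, pt, ite_mul, zero_mul, one_mul, Finset.sum_ite_eq]

lemma EU_decomp_right (u : A1 → A2 → ℝ) (s1 : A1 → ℝ) (s2 : A2 → ℝ) :
    EU u s1 s2 = ∑ y, s2 y * EU u s1 (pt y) := by
  simp_rw [EU_pt_right, Finset.mul_sum]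
  rw [EU, Finset.sum_comm]
  exact Finset.sum_congr rfl fun y _ => Finset.sum_congr rfl fun x _ => by ring

lemma EU_decomp_left (u : A1 → A2 → ℝ) (s1 : A1 → ℝ) (s2 : A2 → ℝ) :
    EU u s1 s2 = ∑ x, s1 x * EU u (pt x) s2 := by
  simp_rw [EU_pt_left, Finset.mul_sum]
  rw [EU]
  exact Finset.sum_congr rfl fun x _ => Finset.sum_congr rfl fun y _ => by ring

lemma EU_nonneg (u : A1 → A2 → ℝ) (h : ∀ x y, 0 ≤ u x y) {s1 s2}
    (h1 : ∀ x, 0 ≤ s1 x) (h2 : ∀ y, 0 ≤ s2 y) : 0 ≤ EU u s1 s2 := by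
  apply Finset.sum_nonneg; intro x _
  apply Finset.sum_nonneg; intro y _
  have := h x y; have := h1 x; have := h2 y; positivity

lemma EU_le (u : A1 → A2 → ℝ) (c : ℝ) (h : ∀ x y, u x y ≤ c) {s1 s2}
    (h1 : IsMixed s1) (h2 : IsMixed s2) : EU u s1 s2 ≤ c := by
  have : EU u s1 s2 ≤ ∑ x, ∑ y, s1 x * s2 y * c := by
    apply Finset.sum_le_sum; intro x _
    apply Finset.sum_le_sum; intro y _
    exact mul_le_mul_of_nonneg_left (h x y) (mul_nonneg (h1.1 x) (h2.1 y))
  have e : ∀ x, ∑ y, s1 x * s2 y * c = s1 x * c := fun x => by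
    rw [← Finset.sum_mul, ← Finset.mul_sum, h2.2, mul_one]
  calc EU u s1 s2 ≤ ∑ x, ∑ y, s1 x * s2 y * c := this
    _ = ∑ x, s1 x * c := Finset.sum_congr rfl fun x _ => e x
    _ = c := by rw [← Finset.sum_mul, h1.2, one_mul]

lemma EU_add (u v : A1 → A2 → ℝ) (s1 : A1 → ℝ) (s2 : A2 → ℝ) :
    EU (fun x y => u x y + v x y) s1 s2 = EU u s1 s2 + EU v s1 s2 := by
  simp [EU, mul_add, Finset.sum_add_distrib]

end Helpers

lemma nb_sum_le (x y : Fin 101) : nbU1 x y + nbU2 x y ≤ 100 := by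
  unfold nbU1 nbU2
  split
  · rename_i h
    have : ((x:ℕ):ℝ) + ((y:ℕ):ℝ) ≤ 100 := by exact_mod_cast h
    linarith
  · norm_num

lemma nbU1_nonneg (x y : Fin 101) : 0 ≤ nbU1 x y := by unfold nbU1; split <;> positivity
lemma nbU2_nonneg (x y : Fin 101) : 0 ≤ nbU2 x y := by unfold nbU2; split <;> positivity

lemma nbU1_pun (x : Fin 101) : nbU1 x (⟨100, by omega⟩ : Fin 101) = 0 := by
  unfold nbU1
  split
  · rename_i h
    have : (x:ℕ) = 0 := by simpa using h
    simp [this]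
  · rfl

lemma nbU2_pun (y : Fin 101) : nbU2 (⟨100, by omega⟩ : Fin 101) y = 0 := by
  unfold nbU2
  split
  · rename_i h
    have : (y:ℕ) = 0 := by simpa using h
    simp [this]
  · rfl

/-- in the Nash bargaining game, every pure profile (a, 100−a) is a CE. -/
theorem nb_ce (a : Fin 101) :
    IsCE nbU1 nbU2 (pt a, pt (⟨100 - (a : ℕ), by omega⟩ : Fin 101)) := by
  set b : Fin 101 := ⟨100 - (a : ℕ), by omega⟩ with hbdef
  have ha : (a:ℕ) ≤ 100 := by omega
  have hE1 : EU nbU1 (pt a) (pt b) = ((a:ℕ):ℝ) := by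
    rw [EU_pt_pt]; unfold nbU1; rw [if_pos]; simp [hbdef]; omega
  have hE2 : EU nbU2 (pt a) (pt b) = 100 - ((a:ℕ):ℝ) := by
    rw [EU_pt_pt]; unfold nbU2; rw [if_pos]
    · simp only [hbdef]
      rw [Nat.cast_sub ha]; norm_num
    · simp [hbdef]; omega
  refine ⟨⟨pt_mixed a, pt_mixed b⟩, ?_, ?_⟩
  · intro s1' hs1'
    by_cases hC : ∃ y : Fin 101, 100 - ((a:ℕ):ℝ) ≤ EU nbU2 s1' (pt y)
    · left
      show sSup _ ≤ EU nbU1 (pt a) (pt b)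
      rw [hE1]
      apply Real.sSup_le
      · rintro x ⟨s2', ⟨hm2, hbr⟩, rfl⟩
        obtain ⟨y, hy⟩ := hC
        have h2 : 100 - ((a:ℕ):ℝ) ≤ EU nbU2 s1' s2' :=
          le_trans hy (hbr (pt y) (pt_mixed y))
        have hsum : EU nbU1 s1' s2' + EU nbU2 s1' s2' ≤ 100 := by
          rw [← EU_add]; exact EU_le _ 100 nb_sum_le hs1' hm2
        linarith
      · positivity
    · right
      push_neg at hC
      constructor
      · show sSup _ < EU nbU2 (pt a) (pt b)
        rw [hE2]
        obtain ⟨y0, _, hy0⟩ := Finset.exists_max_image Finset.univ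
          (fun y => EU nbU2 s1' (pt y)) ⟨0, Finset.mem_univ 0⟩
        have hsup : sSup {x | ∃ s2', IsMixed s2' ∧ x = EU nbU2 s1' s2'} ≤
            EU nbU2 s1' (pt y0) := by
          apply Real.sSup_le
          · rintro x ⟨s2', hm2, rfl⟩
            rw [EU_decomp_right]
            calc ∑ y, s2' y * EU nbU2 s1' (pt y)
                ≤ ∑ y, s2' y * EU nbU2 s1' (pt y0) := by
                  apply Finset.sum_le_sum; intro y _
                  exact mul_le_mul_of_nonneg_left (hy0 y (Finset.mem_univ y)) (hm2.1 y)
              _ = EU nbU2 s1' (pt y0) := by rw [← Finset.sum_mul, hm2.2, one_mul]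
          · exact EU_nonneg _ nbU2_nonneg hs1'.1 (pt_mixed y0).1
        exact lt_of_le_of_lt hsup (hC y0)
      · refine ⟨pt (⟨100, by omega⟩ : Fin 101), pt_mixed _, ?_⟩
        show EU nbU1 s1' _ ≤ EU nbU1 (pt a) (pt b)
        rw [hE1, EU_pt_right]
        simp only [nbU1_pun, mul_zero, Finset.sum_const_zero]
        positivity
  · intro s2' hs2'
    by_cases hC : ∃ x : Fin 101, ((a:ℕ):ℝ) ≤ EU nbU1 (pt x) s2'
    · left
      show sSup _ ≤ EU nbU2 (pt a) (pt b)
      rw [hE2]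
      apply Real.sSup_le
      · rintro x ⟨s1', ⟨hm1, hbr⟩, rfl⟩
        obtain ⟨x0, hx0⟩ := hC
        have h1 : ((a:ℕ):ℝ) ≤ EU nbU1 s1' s2' :=
          le_trans hx0 (hbr (pt x0) (pt_mixed x0))
        have hsum : EU nbU1 s1' s2' + EU nbU2 s1' s2' ≤ 100 := by
          rw [← EU_add]; exact EU_le _ 100 nb_sum_le hm1 hs2'
        linarith
      · have : ((a:ℕ):ℝ) ≤ 100 := by exact_mod_cast ha
        linarith
    · right
      push_neg at hC
      constructor
      · show sSup _ < EU nbU1 (pt a) (pt b)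
        rw [hE1]
        obtain ⟨x0, _, hx0⟩ := Finset.exists_max_image Finset.univ
          (fun x => EU nbU1 (pt x) s2') ⟨0, Finset.mem_univ 0⟩
        have hsup : sSup {x | ∃ s1', IsMixed s1' ∧ x = EU nbU1 s1' s2'} ≤
            EU nbU1 (pt x0) s2' := by
          apply Real.sSup_le
          · rintro x ⟨s1', hm1, rfl⟩
            rw [EU_decomp_left]
            calc ∑ z, s1' z * EU nbU1 (pt z) s2'
                ≤ ∑ z, s1' z * EU nbU1 (pt x0) s2' := by
                  apply Finset.sum_le_sum; intro z _
                  exact mul_le_mul_of_nonneg_left (hx0 z (Finset.mem_univ z)) (hm1.1 z)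
              _ = EU nbU1 (pt x0) s2' := by rw [← Finset.sum_mul, hm1.2, one_mul]
          · exact EU_nonneg _ nbU1_nonneg (pt_mixed x0).1 hs2'.1
        exact lt_of_le_of_lt hsup (hC x0)
      · refine ⟨pt (⟨100, by omega⟩ : Fin 101), pt_mixed _, ?_⟩
        show EU nbU2 _ s2' ≤ EU nbU2 (pt a) (pt b)
        rw [hE2, EU_pt_left]
        simp only [nbU2_pun, mul_zero, Finset.sum_const_zero]
        have : ((a:ℕ):ℝ) ≤ 100 := by exact_mod_cast ha
        linarith
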